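/- arXiv:1406.6668 — 3 statements merged into one kernel-verified Lean document; each statement's English description precedes it below -/
import Mathlib

section
/- With V, mᵢ, θᵢ, Θ, φᵢ as in the context, for every w ∈ ℝ^N the element Σᵢ wᵢ φᵢ is the unique minimizer of the norm ‖v‖ over all v ∈ V satisfying the constraints mᵢ(v) = wᵢ for i = 1, …, N. In particular (taking w the i-th standard basis vector), φᵢ is the unique minimizer of ‖φ‖ subject to mᵢ(φ) = 1 and mⱼ(φ) = 0 for j ≠ i. -/
open RealInnerProductSpace

/-- For every `w ∈ ℝ^N`, the element `Σᵢ wᵢ φᵢ` is the unique minimizer of the norm over all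
`v ∈ V` satisfying the measurement constraints `mᵢ(v) = wᵢ`. In particular, taking `w` the `i`-th
standard basis vector, `φᵢ` is the unique minimizer of the norm subject to `mᵢ(φ) = 1` and
`mⱼ(φ) = 0` for `j ≠ i`. -/
theorem basis_minimizing
    {V : Type*} [NormedAddCommGroup V] [InnerProductSpace ℝ V] [CompleteSpace V]
    {N : ℕ} (m : Fin N → (V →L[ℝ] ℝ)) (hm : LinearIndependent ℝ m)
    (θ : Fin N → V) (hθ : ∀ i v, ⟪θ i, v⟫ = m i v)
    (Θ : Matrix (Fin N) (Fin N) ℝ) (hΘ : ∀ i j, Θ i j = ⟪θ i, θ j⟫)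
    (hΘpd : Θ.PosDef)
    (φ : Fin N → V) (hφ : ∀ i, φ i = ∑ j, Θ⁻¹ i j • θ j) :
    (∀ w : Fin N → ℝ,
        (∀ i, m i (∑ j, w j • φ j) = w i) ∧
          ∀ v : V, (∀ i, m i v = w i) → v ≠ ∑ j, w j • φ j →
            ‖∑ j, w j • φ j‖ < ‖v‖) ∧
      ∀ i, (m i (φ i) = 1 ∧ ∀ j, j ≠ i → m j (φ i) = 0) ∧
        ∀ v : V, (m i v = 1 ∧ ∀ j, j ≠ i → m j v = 0) → v ≠ φ i → ‖φ i‖ < ‖v‖ := by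
  have hinv : IsUnit Θ.det := isUnit_iff_ne_zero.mpr hΘpd.det_pos.ne'
  have hsymm : ∀ i j, Θ i j = Θ j i := by
    intro i j
    have := hΘpd.isHermitian
    have h := congrFun (congrFun this.eq j) i
    simpa [Matrix.conjTranspose_apply] using h
  -- m i (φ k) = δ_{ki}
  have hδ : ∀ i k, m i (φ k) = if k = i then 1 else 0 := by
    intro i k
    have : m i (φ k) = ∑ j, Θ⁻¹ k j * Θ j i := by
      rw [← hθ, hφ k, inner_sum]
      refine Finset.sum_congr rfl fun j _ => ?_
      rw [real_inner_smul_right, ← hΘ, hsymm i j]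
    rw [this]
    have := Matrix.nonsing_inv_mul Θ hinv
    have h1 := congrFun (congrFun this k) i
    simpa [Matrix.mul_apply, Matrix.one_apply] using h1
  -- if all m k x = 0 then ⟪φ j, x⟫ = 0
  have horth : ∀ (x : V), (∀ k, m k x = 0) → ∀ j, ⟪φ j, x⟫ = 0 := by
    intro x hx j
    rw [hφ j, sum_inner]
    refine Finset.sum_eq_zero fun k _ => ?_
    rw [real_inner_smul_left, hθ, hx k, mul_zero]
  have main : ∀ w : Fin N → ℝ,
      (∀ i, m i (∑ j, w j • φ j) = w i) ∧
        ∀ v : V, (∀ i, m i v = w i) → v ≠ ∑ j, w j • φ j →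
          ‖∑ j, w j • φ j‖ < ‖v‖ := by
    intro w
    have hcon : ∀ i, m i (∑ j, w j • φ j) = w i := by
      intro i
      simp only [map_sum, map_smul, smul_eq_mul, hδ]
      simp
    refine ⟨hcon, fun v hv hne => ?_⟩
    set u : V := ∑ j, w j • φ j with hu
    have hx : ∀ k, m k (v - u) = 0 := by
      intro k; rw [map_sub, hv k, hcon k, sub_self]
    have hiu : ⟪u, v - u⟫ = 0 := by
      rw [hu, sum_inner]
      refine Finset.sum_eq_zero fun j _ => ?_
      rw [real_inner_smul_left, horth _ hx j, mul_zero]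
    have hsq : ‖u‖ ^ 2 < ‖v‖ ^ 2 := by
      have hv2 : ‖v‖ ^ 2 = ‖u‖ ^ 2 + ‖v - u‖ ^ 2 := by
        have h1 : v = u + (v - u) := by abel
        calc ‖v‖ ^ 2 = ‖u + (v - u)‖ ^ 2 := by rw [← h1]
          _ = ‖u‖ ^ 2 + 2 * ⟪u, v - u⟫ + ‖v - u‖ ^ 2 := norm_add_sq_real u (v - u)
          _ = ‖u‖ ^ 2 + ‖v - u‖ ^ 2 := by rw [hiu]; ring
      have hpos : 0 < ‖v - u‖ ^ 2 := by
        have : v - u ≠ 0 := sub_ne_zero.mpr hne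
        exact pow_pos (norm_pos_iff.mpr this) 2
      linarith
    exact lt_of_pow_lt_pow_left₀ 2 (norm_nonneg v) hsq
  refine ⟨main, fun i => ?_⟩
  have hw := main (Pi.single i 1 : Fin N → ℝ)
  have heq : (∑ j, (Pi.single i 1 : Fin N → ℝ) j • φ j) = φ i := by
    rw [Finset.sum_eq_single i (fun j _ hj => by simp [Pi.single_eq_of_ne hj])
      (fun h => absurd (Finset.mem_univ i) h)]
    simp
  rw [heq] at hw
  constructor
  · refine ⟨by simpa using hw.1 i, fun j hj => by simpa [Pi.single_eq_of_ne hj] using hw.1 j⟩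
  · intro v hv hne
    refine hw.2 v (fun j => ?_) hne
    rcases eq_or_ne j i with rfl | hji
    · simpa using hv.1
    · simpa [Pi.single_eq_of_ne hji] using hv.2 j hji
end

section
/- With V, mᵢ, θᵢ, Θ, φᵢ as in the context, for all k, v ∈ V the pointwise recovery error estimate |⟪k, v⟫ − Σᵢ mᵢ(v) ⟪k, φᵢ⟫| ≤ σ(k) ‖v‖ holds, where σ(k)² := ‖k‖² − Σᵢⱼ (Θ⁻¹)ᵢⱼ ⟪k, θᵢ⟫ ⟪k, θⱼ⟫ (which is nonnegative). -/
/-!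
Put `cᵢ := ⟪k, φᵢ⟫`, i.e. `c = Θ⁻¹ (⟪θⱼ, k⟫)ⱼ`, and `w := k − Σᵢ cᵢ θᵢ`. The Gram system `Θ c = (⟪θⱼ, k⟫)ⱼ`
says that `w` is orthogonal to every `θᵢ`, so `w` is the residual of the orthogonal projection of `k`
onto `span θ`. The recovery error is `⟪w, v⟫`, and orthogonality gives `‖w‖² = ‖k‖² − Σᵢ cᵢ ⟪θᵢ, k⟫ = σ(k)²`;
Cauchy–Schwarz concludes.
-/

open RealInnerProductSpace Matrix

section GramResidual

variable {V ι : Type*} [NormedAddCommGroup V] [InnerProductSpace ℝ V] [Fintype ι]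
  (θ : ι → V) (c : ι → ℝ) (k : V)

theorem inner_sub_sum_smul_left (v : V) :
    ⟪k - ∑ i, c i • θ i, v⟫ = ⟪k, v⟫ - ∑ i, c i * ⟪θ i, v⟫ := by
  simp only [inner_sub_left, sum_inner, real_inner_smul_left]

variable {θ c k}

theorem inner_sub_sum_smul_eq_zero_of_gram_mulVec
    (hc : gram ℝ θ *ᵥ c = fun l => ⟪θ l, k⟫) (l : ι) :
    ⟪θ l, k - ∑ i, c i • θ i⟫ = 0 := by
  have hl := congrFun hc l
  simp only [mulVec, dotProduct, gram, of_apply] at hl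
  rw [inner_sub_right, inner_sum, ← hl, sub_eq_zero]
  exact Finset.sum_congr rfl fun i _ => by rw [real_inner_smul_right, mul_comm]

theorem norm_sub_sum_smul_sq_of_gram_mulVec (hc : gram ℝ θ *ᵥ c = fun l => ⟪θ l, k⟫) :
    ‖k - ∑ i, c i • θ i‖ ^ 2 = ‖k‖ ^ 2 - ∑ i, c i * ⟪θ i, k⟫ := by
  calc ‖k - ∑ i, c i • θ i‖ ^ 2 = ⟪k - ∑ i, c i • θ i, k - ∑ i, c i • θ i⟫ :=
        (real_inner_self_eq_norm_sq _).symm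
    _ = ⟪k, k - ∑ i, c i • θ i⟫ := by
        simp only [inner_sub_sum_smul_left _ _ k, inner_sub_sum_smul_eq_zero_of_gram_mulVec hc,
          mul_zero, Finset.sum_const_zero, sub_zero]
    _ = ‖k‖ ^ 2 - ∑ i, c i * ⟪θ i, k⟫ := by
        rw [real_inner_comm, inner_sub_sum_smul_left, real_inner_self_eq_norm_sq]

theorem abs_inner_sub_sum_le_of_gram_mulVec (hc : gram ℝ θ *ᵥ c = fun l => ⟪θ l, k⟫) (v : V) :
    |⟪k, v⟫ - ∑ i, c i * ⟪θ i, v⟫| ≤ √(‖k‖ ^ 2 - ∑ i, c i * ⟪θ i, k⟫) * ‖v‖ := by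
  rw [← inner_sub_sum_smul_left, ← norm_sub_sum_smul_sq_of_gram_mulVec hc,
    Real.sqrt_sq (norm_nonneg _)]
  exact abs_real_inner_le_norm _ _

end GramResidual

theorem pointwise_recovery_error_general
    {V : Type*} [NormedAddCommGroup V] [InnerProductSpace ℝ V]
    {N : ℕ} (m : Fin N → (V →L[ℝ] ℝ))
    (θ : Fin N → V) (hθ : ∀ i v, ⟪θ i, v⟫ = m i v)
    (Θ : Matrix (Fin N) (Fin N) ℝ) (hΘ : ∀ i j, Θ i j = ⟪θ i, θ j⟫)
    (hΘpd : Θ.PosDef)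
    (φ : Fin N → V) (hφ : ∀ i, φ i = ∑ j, Θ⁻¹ i j • θ j) :
    ∀ k v : V,
      0 ≤ ‖k‖ ^ 2 - ∑ i, ∑ j, Θ⁻¹ i j * ⟪k, θ i⟫ * ⟪k, θ j⟫ ∧
      |⟪k, v⟫ - ∑ i, m i v * ⟪k, φ i⟫|
        ≤ Real.sqrt (‖k‖ ^ 2 - ∑ i, ∑ j, Θ⁻¹ i j * ⟪k, θ i⟫ * ⟪k, θ j⟫) * ‖v‖ := by
  intro k v
  set c := Θ⁻¹ *ᵥ fun j => ⟪θ j, k⟫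
  have hc : gram ℝ θ *ᵥ c = fun l => ⟪θ l, k⟫ := by
    have hgram : gram ℝ θ = Θ := by ext i j; simp [gram, hΘ]
    rw [hgram, mulVec_mulVec, mul_nonsing_inv Θ ((isUnit_iff_isUnit_det Θ).mp hΘpd.isUnit),
      one_mulVec]
  have hφc (i : Fin N) : ⟪k, φ i⟫ = c i := by
    simp only [hφ, inner_sum, real_inner_smul_right, c, mulVec, dotProduct, real_inner_comm k]
  have hσ : ∑ i, ∑ j, Θ⁻¹ i j * ⟪k, θ i⟫ * ⟪k, θ j⟫ = ∑ i, c i * ⟪θ i, k⟫ := by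
    simp only [c, mulVec, dotProduct, Finset.sum_mul, real_inner_comm k]
    exact Finset.sum_congr rfl fun i _ => Finset.sum_congr rfl fun j _ => by ring
  have herr : ∑ i, m i v * ⟪k, φ i⟫ = ∑ i, c i * ⟪θ i, v⟫ := by
    simp only [hφc, hθ, mul_comm]
  rw [hσ, herr]
  exact ⟨norm_sub_sum_smul_sq_of_gram_mulVec hc ▸ sq_nonneg _,
    abs_inner_sub_sum_le_of_gram_mulVec hc v⟩

/-- Pointwise recovery error estimate: for all `k, v ∈ V`,
`|⟪k, v⟫ − Σᵢ mᵢ(v) ⟪k, φᵢ⟫| ≤ σ(k) ‖v‖` where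
`σ(k)² = ‖k‖² − Σᵢⱼ (Θ⁻¹)ᵢⱼ ⟪k, θᵢ⟫ ⟪k, θⱼ⟫` is nonnegative. -/
theorem pointwise_recovery_error
    {V : Type*} [NormedAddCommGroup V] [InnerProductSpace ℝ V] [CompleteSpace V]
    {N : ℕ} (m : Fin N → (V →L[ℝ] ℝ)) (hm : LinearIndependent ℝ m)
    (θ : Fin N → V) (hθ : ∀ i v, ⟪θ i, v⟫ = m i v)
    (Θ : Matrix (Fin N) (Fin N) ℝ) (hΘ : ∀ i j, Θ i j = ⟪θ i, θ j⟫)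
    (hΘpd : Θ.PosDef)
    (φ : Fin N → V) (hφ : ∀ i, φ i = ∑ j, Θ⁻¹ i j • θ j) :
    ∀ k v : V,
      0 ≤ ‖k‖ ^ 2 - ∑ i, ∑ j, Θ⁻¹ i j * ⟪k, θ i⟫ * ⟪k, θ j⟫ ∧
      |⟪k, v⟫ - ∑ i, m i v * ⟪k, φ i⟫|
        ≤ Real.sqrt (‖k‖ ^ 2 - ∑ i, ∑ j, Θ⁻¹ i j * ⟪k, θ i⟫ * ⟪k, θ j⟫) * ‖v‖ :=
  pointwise_recovery_error_general m θ hθ Θ hΘ hΘpd φ hφ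
end

section
/- With V, mᵢ, θᵢ, Θ, φᵢ, V₀ as in the context, let W be a real normed space, ι : V → W a linear map, and ρ ≥ 0 a constant such that ‖ι v‖_W ≤ ρ ‖v‖ for all v ∈ V₀. Then for every v ∈ V, ‖ι(v − Σᵢ mᵢ(v) φᵢ)‖_W ≤ ρ ‖v‖. -/
open RealInnerProductSpace

/-- `𝓗(Ω)`-norm accuracy estimate: if `ι : V → W` is linear and `‖ι v‖ ≤ ρ ‖v‖` for all `v` in
`V₀ = {v : mᵢ(v) = 0 for all i}`, then `‖ι(v − Σᵢ mᵢ(v) φᵢ)‖ ≤ ρ ‖v‖` for every `v ∈ V`. -/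
theorem recovery_error_norm_bound
    {V : Type*} [NormedAddCommGroup V] [InnerProductSpace ℝ V] [CompleteSpace V]
    {N : ℕ} (m : Fin N → (V →L[ℝ] ℝ)) (hm : LinearIndependent ℝ m)
    (θ : Fin N → V) (hθ : ∀ i v, ⟪θ i, v⟫ = m i v)
    (Θ : Matrix (Fin N) (Fin N) ℝ) (hΘ : ∀ i j, Θ i j = ⟪θ i, θ j⟫)
    (hΘpd : Θ.PosDef)
    (φ : Fin N → V) (hφ : ∀ i, φ i = ∑ j, Θ⁻¹ i j • θ j)
    {W : Type*} [NormedAddCommGroup W] [NormedSpace ℝ W]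
    (ι : V →ₗ[ℝ] W) (ρ : ℝ) (hρ : 0 ≤ ρ)
    (hbound : ∀ v : V, (∀ i, m i v = 0) → ‖ι v‖ ≤ ρ * ‖v‖) :
    ∀ v : V, ‖ι (v - ∑ i, m i v • φ i)‖ ≤ ρ * ‖v‖ := by
  intro v
  have hdet : IsUnit Θ.det := isUnit_iff_ne_zero.mpr (ne_of_gt hΘpd.det_pos)
  have hinv : Θ⁻¹ * Θ = 1 := Matrix.nonsing_inv_mul Θ hdet
  -- m i (φ j) = δ ij
  have hmφ : ∀ i j, m i (φ j) = if j = i then 1 else 0 := by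
    intro i j
    rw [← hθ, hφ, inner_sum]
    have : ∀ k, ⟪θ i, Θ⁻¹ j k • θ k⟫ = Θ⁻¹ j k * Θ k i := by
      intro k
      rw [real_inner_smul_right, hΘ k i, real_inner_comm]
    simp only [this]
    have := congrFun (congrFun hinv j) i
    simp only [Matrix.mul_apply, Matrix.one_apply] at this
    simpa using this
  set u : V := v - ∑ i, m i v • φ i with hu
  have hmu : ∀ i, m i u = 0 := by
    intro i
    simp only [hu, map_sub, map_sum, map_smul, smul_eq_mul, hmφ]
    simp
  -- u is orthogonal to each θ k
  have hθu : ∀ k, ⟪u, θ k⟫ = 0 := by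
    intro k
    rw [real_inner_comm, hθ]
    exact hmu k
  have hφu : ∀ k, ⟪u, φ k⟫ = 0 := by
    intro k
    rw [hφ, inner_sum]
    simp [real_inner_smul_right, hθu]
  have horth : ⟪u, ∑ i, m i v • φ i⟫ = 0 := by
    rw [inner_sum]
    simp [real_inner_smul_right, hφu]
  have hnorm : ‖u‖ ≤ ‖v‖ := by
    have hv : v = u + ∑ i, m i v • φ i := by rw [hu]; abel
    have hpyth : ‖v‖ ^ 2 = ‖u‖ ^ 2 + ‖∑ i, m i v • φ i‖ ^ 2 := by
      nth_rewrite 1 [hv]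
      rw [norm_add_sq_real, horth]; ring
    have h1 : ‖u‖ ^ 2 ≤ ‖v‖ ^ 2 := by
      rw [hpyth]; nlinarith [sq_nonneg ‖∑ i, m i v • φ i‖]
    nlinarith [norm_nonneg u, norm_nonneg v]
  calc ‖ι u‖ ≤ ρ * ‖u‖ := hbound u hmu
    _ ≤ ρ * ‖v‖ := by apply mul_le_mul_of_nonneg_left hnorm hρ
end
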